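/- arXiv:1606.07254 — 6 statements merged into one kernel-verified Lean document; each statement's English description precedes it below -/
import Mathlib

section
/- The ring of Gevrey-type formal power series is a local ring: let O^z be the set of formal power series x = Σ_{d∈ℕ^s} Σ_{k≥0} a_{d,k} q^d z^k with complex coefficients such that there exist constants C₁, C₂ > 0 with |a_{d,k}| ≤ C₁ C₂^{|d|+k} |d|^k for all d, k (with the convention |d|^k = 1 when |d| = k = 0). Then any element x ∈ O^z with a_{0,0} ≠ 0 is invertible in O^z; in particular O^z is a local ring. -/
/-!
The formal inverse `y = Σ b_{d,k} q^d z^k` exists since `a_{0,0} ≠ 0`; write `a = ‖a_{0,0}‖`.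
Comparing coefficients in `x * y = 1` gives
`a_{0,0} b_{d,k} = -∑ a_{q₁,p₁} b_{q₂,p₂}` over `q₁ + q₂ = d`, `p₁ + p₂ = k`, `(q₁, p₁) ≠ 0`.
By strong induction on `|d| + k` this yields `‖b_{d,k}‖ ≤ a⁻¹ (C₂ / r) ^ (|d| + k) |d| ^ k`:
each term of the sum is at most `C₁ a⁻¹ (C₂ / r) ^ (|d| + k) |d| ^ k · r ^ (|q₁| + p₁)`, there are
at most `2 ^ ((s + 1) m)` terms with `|q₁| + p₁ = m`, so the weights `r ^ (|q₁| + p₁)` sum to at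
most `2 ^ (s + 2) r`, and this is at most `a / C₁` once `r` is small.
-/


open scoped BigOperators

noncomputable section

/-- The total degree `|d|` of a multi-index `d ∈ ℕ^s`. -/
def mdeg {s : ℕ} (d : Fin s →₀ ℕ) : ℕ := d.sum fun _ n => n

/-- The Gevrey-type condition defining the ring `O^z`: a formal power series
`x = Σ_{d,k} a_{d,k} q^d z^k` (viewed as a power series in `z` with coefficients
formal power series in `q = (q₁,…,q_s)`) belongs to `O^z` iff there are constants
`C₁, C₂ > 0` with `|a_{d,k}| ≤ C₁ C₂^{|d|+k} |d|^k` for all `d, k`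
(with the convention `|d|^k = 1` when `|d| = k = 0`, which is Lean's `0 ^ 0 = 1`). -/
def GevreyType (s : ℕ) (x : PowerSeries (MvPowerSeries (Fin s) ℂ)) : Prop :=
  ∃ C₁ C₂ : ℝ, 0 < C₁ ∧ 0 < C₂ ∧ ∀ (d : Fin s →₀ ℕ) (k : ℕ),
    ‖MvPowerSeries.coeff d (PowerSeries.coeff k x)‖ ≤
      C₁ * C₂ ^ (mdeg d + k) * (mdeg d : ℝ) ^ k

open Finset

lemma mdeg_eq_degree {s : ℕ} (d : Fin s →₀ ℕ) : mdeg d = d.degree := rfl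

lemma mdeg_add {s : ℕ} (d e : Fin s →₀ ℕ) : mdeg (d + e) = mdeg d + mdeg e := by
  simp [mdeg_eq_degree]

lemma mdeg_eq_zero {s : ℕ} {d : Fin s →₀ ℕ} : mdeg d = 0 ↔ d = 0 := by
  simp [mdeg_eq_degree, Finsupp.degree_eq_zero_iff]

lemma apply_le_mdeg {s : ℕ} (d : Fin s →₀ ℕ) (i : Fin s) : d i ≤ mdeg d :=
  Finsupp.le_degree i d

lemma sum_pow_le_sum_pow_of_card_fiber_le {α : Type*} {X : Finset α} {T : Finset ℕ} {w : α → ℕ}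
    {c ρ : ℝ} (hρ : 0 ≤ ρ) (hw : ∀ x ∈ X, w x ∈ T)
    (hcard : ∀ m ∈ T, (#{x ∈ X | w x = m} : ℝ) ≤ c ^ m) :
    ∑ x ∈ X, ρ ^ w x ≤ ∑ m ∈ T, (c * ρ) ^ m := by
  rw [← sum_fiberwise_of_maps_to hw]
  refine sum_le_sum fun m hm => ?_
  calc ∑ x ∈ X with w x = m, ρ ^ w x = #{x ∈ X | w x = m} * ρ ^ m := by
        rw [sum_congr rfl fun x hx => by rw [(mem_filter.1 hx).2], sum_const, nsmul_eq_mul]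
    _ ≤ c ^ m * ρ ^ m := by gcongr; exact hcard m hm
    _ = (c * ρ) ^ m := (mul_pow c ρ m).symm

lemma geom_sum_Ico_one_le {σ : ℝ} (h₀ : 0 ≤ σ) (h₁ : σ ≤ 1 / 2) (n : ℕ) :
    ∑ m ∈ Ico 1 n, σ ^ m ≤ 2 * σ := by
  calc ∑ m ∈ Ico 1 n, σ ^ m ≤ σ ^ 1 / (1 - σ) := geom_sum_Ico_le_of_lt_one h₀ (by linarith)
    _ ≤ 2 * σ := by rw [pow_one, div_le_iff₀ (by linarith)]; nlinarith

/-- A point `((p₁, p₂), (q₁, q₂))` of the product of antidiagonals is determined by `(p₁, q₁)`,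
and `p₁ + |q₁| = m` leaves at most `m + 1` values for `p₁` and for each coordinate of `q₁`. -/
lemma card_filter_antidiagonal_weight_le {s : ℕ} (k : ℕ) (d : Fin s →₀ ℕ) (m : ℕ) :
    #{z ∈ antidiagonal k ×ˢ antidiagonal d | mdeg z.2.1 + z.1.1 = m} ≤ (m + 1) ^ (s + 1) := by
  calc #{z ∈ antidiagonal k ×ˢ antidiagonal d | mdeg z.2.1 + z.1.1 = m}
      ≤ #(range (m + 1) ×ˢ Fintype.piFinset fun _ : Fin s => range (m + 1)) := by
        refine card_le_card_of_injOn (fun z => (z.1.1, ⇑z.2.1)) ?_ ?_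
        · intro z hz
          simp only [coe_filter, Set.mem_ofPred_eq, mem_product] at hz
          simp only [coe_product, Set.mem_prod, mem_coe, mem_range, Fintype.mem_piFinset]
          exact ⟨by omega, fun i => by have := apply_le_mdeg z.2.1 i; omega⟩
        · rintro ⟨⟨p₁, p₂⟩, q₁, q₂⟩ hz ⟨⟨p₁', p₂'⟩, q₁', q₂'⟩ hz' h
          simp only [coe_filter, Set.mem_ofPred_eq, mem_product,
            HasAntidiagonal.mem_antidiagonal] at hz hz'
          simp only [Prod.mk.injEq, DFunLike.coe_fn_eq] at h
          obtain ⟨rfl, rfl⟩ := h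
          obtain rfl : p₂ = p₂' := by omega
          obtain rfl : q₂ = q₂' := add_left_cancel (hz.1.2.trans hz'.1.2.symm)
          rfl
    _ = (m + 1) ^ (s + 1) := by simp [pow_succ']

lemma succ_pow_le_two_pow_pow (m n : ℕ) : ((m + 1) ^ n : ℝ) ≤ ((2 : ℝ) ^ n) ^ m := by
  rw [← pow_mul, mul_comm, pow_mul]
  exact_mod_cast Nat.pow_le_pow_left (Nat.lt_two_pow_self) n

lemma weight_mem_Ico_of_mem_erase {s k : ℕ} {d : Fin s →₀ ℕ}
    {z : (ℕ × ℕ) × (Fin s →₀ ℕ) × (Fin s →₀ ℕ)}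
    (hz : z ∈ (antidiagonal k ×ˢ antidiagonal d).erase ((0, k), (0, d))) :
    mdeg z.2.1 + z.1.1 ∈ Ico 1 (mdeg d + k + 1) := by
  obtain ⟨⟨p₁, p₂⟩, q₁, q₂⟩ := z
  simp only [mem_erase, ne_eq, mem_product, HasAntidiagonal.mem_antidiagonal] at hz
  obtain ⟨hne, rfl, rfl⟩ := hz
  simp only [mem_Ico, mdeg_add]
  refine ⟨Nat.pos_of_ne_zero fun h => hne ?_, by omega⟩
  obtain ⟨rfl, rfl⟩ : q₁ = 0 ∧ p₁ = 0 := ⟨mdeg_eq_zero.1 (by omega), by omega⟩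
  simp

lemma sum_pow_weight_erase_le {s : ℕ} (k : ℕ) (d : Fin s →₀ ℕ) {r : ℝ} (h₀ : 0 ≤ r)
    (h₁ : 2 ^ (s + 2) * r ≤ 1) :
    ∑ z ∈ (antidiagonal k ×ˢ antidiagonal d).erase ((0, k), (0, d)), r ^ (mdeg z.2.1 + z.1.1)
      ≤ 2 ^ (s + 2) * r := by
  have hcard : ∀ m ∈ Ico 1 (mdeg d + k + 1),
      (#{z ∈ (antidiagonal k ×ˢ antidiagonal d).erase ((0, k), (0, d)) |
        mdeg z.2.1 + z.1.1 = m} : ℝ) ≤ (2 ^ (s + 1)) ^ m := by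
    intro m _
    refine le_trans ?_ (succ_pow_le_two_pow_pow m (s + 1))
    exact_mod_cast (card_le_card (filter_subset_filter _ (erase_subset _ _))).trans
      (card_filter_antidiagonal_weight_le k d m)
  calc _ ≤ ∑ m ∈ Ico 1 (mdeg d + k + 1), (2 ^ (s + 1) * r) ^ m :=
        sum_pow_le_sum_pow_of_card_fiber_le h₀ (fun _ => weight_mem_Ico_of_mem_erase) hcard
    _ ≤ 2 * (2 ^ (s + 1) * r) :=
        geom_sum_Ico_one_le (by positivity) (by rw [pow_succ] at h₁; linarith) _
    _ = 2 ^ (s + 2) * r := by ring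

section Coefficients

variable {σ R : Type*}

lemma coeff_coeff_mul [DecidableEq σ] [Semiring R] (x y : PowerSeries (MvPowerSeries σ R)) (k : ℕ)
    (d : σ →₀ ℕ) :
    MvPowerSeries.coeff d (PowerSeries.coeff k (x * y)) =
      ∑ z ∈ antidiagonal k ×ˢ antidiagonal d,
        MvPowerSeries.coeff z.2.1 (PowerSeries.coeff z.1.1 x) *
          MvPowerSeries.coeff z.2.2 (PowerSeries.coeff z.1.2 y) := by
  rw [PowerSeries.coeff_mul, map_sum, sum_product]
  simp only [MvPowerSeries.coeff_mul]

lemma coeff_zero_coeff_zero_mul_of_mul_eq_one [Semiring R] {x y : PowerSeries (MvPowerSeries σ R)}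
    (hxy : x * y = 1) :
    MvPowerSeries.coeff 0 (PowerSeries.coeff 0 x) * MvPowerSeries.coeff 0 (PowerSeries.coeff 0 y)
      = 1 := by
  simpa using congrArg (fun f => MvPowerSeries.constantCoeff (PowerSeries.constantCoeff f)) hxy

lemma coeff_zero_coeff_zero_mul_eq_neg_sum_of_mul_eq_one [DecidableEq σ] [Ring R]
    {x y : PowerSeries (MvPowerSeries σ R)} (hxy : x * y = 1) {k : ℕ} {d : σ →₀ ℕ}
    (hkd : k ≠ 0 ∨ d ≠ 0) :
    MvPowerSeries.coeff 0 (PowerSeries.coeff 0 x) * MvPowerSeries.coeff d (PowerSeries.coeff k y)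
      = -∑ z ∈ (antidiagonal k ×ˢ antidiagonal d).erase ((0, k), (0, d)),
          MvPowerSeries.coeff z.2.1 (PowerSeries.coeff z.1.1 x) *
            MvPowerSeries.coeff z.2.2 (PowerSeries.coeff z.1.2 y) := by
  have h := coeff_coeff_mul x y k d
  have hmem : ((0, k), (0, d)) ∈ antidiagonal k ×ˢ antidiagonal d := by simp
  rw [hxy, ← add_sum_erase _ _ hmem] at h
  refine eq_neg_of_add_eq_zero_left (h.symm.trans ?_)
  rcases hkd with hk | hd
  · simp [PowerSeries.coeff_one, hk]
  · by_cases hk : k = 0 <;> simp [PowerSeries.coeff_one, MvPowerSeries.coeff_one, hk, hd]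

end Coefficients

section Estimates

variable {𝕜 : Type*} [NormedField 𝕜] {s : ℕ} {x y : PowerSeries (MvPowerSeries (Fin s) 𝕜)}

lemma norm_coeff_mul_coeff_le_of_mem_erase {C₁ b K r : ℝ} (hC₁ : 0 ≤ C₁) (hb : 0 ≤ b)
    (hK : 0 ≤ K) (hr : 0 ≤ r)
    (hx : ∀ d k, ‖MvPowerSeries.coeff d (PowerSeries.coeff k x)‖ ≤
      C₁ * (K * r) ^ (mdeg d + k) * (mdeg d : ℝ) ^ k)
    {d : Fin s →₀ ℕ} {k : ℕ}
    (hy : ∀ d' k', mdeg d' + k' < mdeg d + k → ‖MvPowerSeries.coeff d' (PowerSeries.coeff k' y)‖ ≤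
      b * K ^ (mdeg d' + k') * (mdeg d' : ℝ) ^ k')
    {z : (ℕ × ℕ) × (Fin s →₀ ℕ) × (Fin s →₀ ℕ)}
    (hz : z ∈ (antidiagonal k ×ˢ antidiagonal d).erase ((0, k), (0, d))) :
    ‖MvPowerSeries.coeff z.2.1 (PowerSeries.coeff z.1.1 x) *
        MvPowerSeries.coeff z.2.2 (PowerSeries.coeff z.1.2 y)‖ ≤
      C₁ * b * K ^ (mdeg d + k) * (mdeg d : ℝ) ^ k * r ^ (mdeg z.2.1 + z.1.1) := by
  have hw := mem_Ico.1 (weight_mem_Ico_of_mem_erase hz)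
  obtain ⟨⟨p₁, p₂⟩, q₁, q₂⟩ := z
  simp only [mem_erase, mem_product, HasAntidiagonal.mem_antidiagonal] at hz hw
  obtain ⟨-, rfl, rfl⟩ := hz
  simp only [mdeg_add, Nat.cast_add] at hw hy ⊢
  have hB := hy q₂ p₂ (by omega)
  calc _ = ‖MvPowerSeries.coeff q₁ (PowerSeries.coeff p₁ x)‖ *
        ‖MvPowerSeries.coeff q₂ (PowerSeries.coeff p₂ y)‖ := norm_mul _ _
    _ ≤ (C₁ * (K * r) ^ (mdeg q₁ + p₁) * (mdeg q₁ : ℝ) ^ p₁) *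
        (b * K ^ (mdeg q₂ + p₂) * (mdeg q₂ : ℝ) ^ p₂) :=
      mul_le_mul (hx q₁ p₁) hB (norm_nonneg _) ((norm_nonneg _).trans (hx q₁ p₁))
    _ ≤ (C₁ * (K * r) ^ (mdeg q₁ + p₁) * (mdeg q₁ + mdeg q₂ : ℝ) ^ p₁) *
        (b * K ^ (mdeg q₂ + p₂) * (mdeg q₁ + mdeg q₂ : ℝ) ^ p₂) := by
      gcongr <;> simp
    _ = _ := by ring

theorem norm_coeff_coeff_le_of_mul_eq_one (hxy : x * y = 1) {C₁ C₂ r : ℝ}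
    (hC₁ : 0 ≤ C₁) (hC₂ : 0 ≤ C₂) (hr : 0 < r) (hr₁ : 2 ^ (s + 2) * r ≤ 1)
    (hrC₁ : C₁ * (2 ^ (s + 2) * r) ≤ ‖MvPowerSeries.coeff 0 (PowerSeries.coeff 0 x)‖)
    (hx : ∀ d k, ‖MvPowerSeries.coeff d (PowerSeries.coeff k x)‖ ≤
      C₁ * C₂ ^ (mdeg d + k) * (mdeg d : ℝ) ^ k)
    (d : Fin s →₀ ℕ) (k : ℕ) :
    ‖MvPowerSeries.coeff d (PowerSeries.coeff k y)‖ ≤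
      ‖MvPowerSeries.coeff 0 (PowerSeries.coeff 0 x)‖⁻¹ * (C₂ / r) ^ (mdeg d + k) *
        (mdeg d : ℝ) ^ k := by
  set a := ‖MvPowerSeries.coeff 0 (PowerSeries.coeff 0 x)‖
  set K := C₂ / r
  have hunit := coeff_zero_coeff_zero_mul_of_mul_eq_one hxy
  have ha : 0 < a := norm_pos_iff.2 (left_ne_zero_of_mul_eq_one hunit)
  rw [show C₂ = K * r from (div_mul_cancel₀ C₂ hr.ne').symm] at hx
  induction hn : mdeg d + k using Nat.strong_induction_on generalizing d k with
  | _ n ih =>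
  subst hn
  by_cases hkd : k = 0 ∧ d = 0
  · obtain ⟨rfl, rfl⟩ := hkd
    have h := congrArg norm hunit
    rw [norm_mul, norm_one] at h
    rw [mdeg_eq_zero.2 rfl, pow_zero, pow_zero, mul_one, mul_one, eq_inv_of_mul_eq_one_right h]
  set B := a⁻¹ * K ^ (mdeg d + k) * (mdeg d : ℝ) ^ k
  refine le_of_mul_le_mul_left ?_ ha
  calc a * ‖MvPowerSeries.coeff d (PowerSeries.coeff k y)‖
      = ‖∑ z ∈ (antidiagonal k ×ˢ antidiagonal d).erase ((0, k), (0, d)),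
          MvPowerSeries.coeff z.2.1 (PowerSeries.coeff z.1.1 x) *
            MvPowerSeries.coeff z.2.2 (PowerSeries.coeff z.1.2 y)‖ := by
        rw [← norm_mul, coeff_zero_coeff_zero_mul_eq_neg_sum_of_mul_eq_one hxy (by tauto),
          norm_neg]
    _ ≤ ∑ z ∈ (antidiagonal k ×ˢ antidiagonal d).erase ((0, k), (0, d)),
          C₁ * B * r ^ (mdeg z.2.1 + z.1.1) := by
        refine (norm_sum_le _ _).trans (sum_le_sum fun z hz => ?_)
        simpa only [B, mul_assoc] using norm_coeff_mul_coeff_le_of_mem_erase hC₁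
          (inv_nonneg.2 ha.le) (by positivity) hr.le hx (fun d' k' h => ih _ h d' k' rfl) hz
    _ ≤ C₁ * B * (2 ^ (s + 2) * r) := by
        rw [← mul_sum]; gcongr; exact sum_pow_weight_erase_le k d hr.le hr₁
    _ ≤ a * B := by
        rw [mul_right_comm]; gcongr

end Estimates

/-- Any element of `O^z` whose leading coefficient `a_{0,0}` is nonzero is invertible
in `O^z`; in particular `O^z` is a local ring. -/
theorem Oz_unit_of_leading_ne_zero (s : ℕ) (x : PowerSeries (MvPowerSeries (Fin s) ℂ))
    (hx : GevreyType s x)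
    (h0 : MvPowerSeries.coeff 0 (PowerSeries.coeff 0 x) ≠ 0) :
    ∃ y : PowerSeries (MvPowerSeries (Fin s) ℂ), GevreyType s y ∧ x * y = 1 := by
  obtain ⟨C₁, C₂, hC₁, hC₂, hbound⟩ := hx
  obtain ⟨y, hxy⟩ : ∃ y, x * y = 1 := IsUnit.exists_right_inv <|
    PowerSeries.isUnit_iff_constantCoeff.2 <| MvPowerSeries.isUnit_iff_constantCoeff.2 <|
      isUnit_iff_ne_zero.2 (by simpa using h0)
  set a := ‖MvPowerSeries.coeff 0 (PowerSeries.coeff 0 x)‖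
  have ha : 0 < a := norm_pos_iff.2 h0
  set r : ℝ := min 1 (a / C₁) / 2 ^ (s + 2)
  have hr : 2 ^ (s + 2) * r = min 1 (a / C₁) := mul_div_cancel₀ _ (by positivity)
  have hr₁ : 2 ^ (s + 2) * r ≤ 1 := hr ▸ min_le_left _ _
  have hrC₁ : C₁ * (2 ^ (s + 2) * r) ≤ a := by
    rw [hr, ← le_div_iff₀' hC₁]
    exact min_le_right _ _
  exact ⟨y, ⟨a⁻¹, C₂ / r, by positivity, by positivity,
    norm_coeff_coeff_le_of_mul_eq_one hxy hC₁.le hC₂.le (by positivity) hr₁ hrC₁ hbound⟩, hxy⟩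

end
end

section
/- The ring ℂ{{z}} of Gevrey series of order 1, consisting of formal power series Σ_{k≥0} a_k z^k with a_k ∈ ℂ such that there exist constants C₁, C₂ > 0 with |a_k| ≤ C₁ C₂^k k! for all k, is a local ring: a Gevrey series of order 1 is invertible in ℂ{{z}} if and only if its constant term a₀ is nonzero. -/
/-!
Coefficientwise, the Cauchy product of bounds `C₁ C₂^i i!` and `D₁ C₂^j j!` is at most
`(n + 1) C₁ D₁ C₂^n n!` because `i! j! ≤ (i + j)!`, and `n + 1 ≤ 2^n` absorbs the number of terms
into the geometric factor.

The coefficients of `x⁻¹` satisfy `a₀ b_n = -∑_{i ≥ 1} a_i b_{n-i}`, and strong induction gives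
`‖b_n‖ ≤ A K^n n!` with `A = ‖a₀‖⁻¹` and `K = C₂ (1 + C₁ A)`: the induction closes because
`C₁ A C₂ ∑_{i+j=n-1} C₂^i K^j = K^n - C₂^n`, a geometric sum in which `K - C₂ = C₁ A C₂`.
Conversely, `x y = 1` forces `a₀ b₀ = 1`.
-/

/-- A formal power series `Σ a_k z^k ∈ ℂ[[z]]` is a Gevrey series of order 1 iff
there are constants `C₁, C₂ > 0` with `|a_k| ≤ C₁ C₂^k k!` for all `k`. -/
def Gevrey1 (x : PowerSeries ℂ) : Prop :=
  ∃ C₁ C₂ : ℝ, 0 < C₁ ∧ 0 < C₂ ∧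
    ∀ k : ℕ, ‖PowerSeries.coeff k x‖ ≤ C₁ * C₂ ^ k * k.factorial

open Finset
open scoped Nat

lemma Nat.factorial_mul_factorial_le_factorial_add (i j : ℕ) : i ! * j ! ≤ (i + j)! :=
  Nat.le_of_dvd (Nat.factorial_pos _) (Nat.factorial_mul_factorial_dvd_factorial_add i j)

lemma mul_sum_antidiagonal_pow_mul_add_pow_le {R : Type*} [CommSemiring R] [PartialOrder R]
    [IsOrderedRing R] {y : R} (x : R) (hy : 0 ≤ y) (m : ℕ) :
    x * ∑ p ∈ antidiagonal m, y ^ p.1 * (x + y) ^ p.2 ≤ (x + y) ^ (m + 1) := by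
  calc x * ∑ p ∈ antidiagonal m, y ^ p.1 * (x + y) ^ p.2
      = (∑ i ∈ range (m + 1), (x + y) ^ i * y ^ (m - i)) * x := by
        rw [← Nat.sum_antidiagonal_swap, mul_comm]
        simp only [Prod.fst_swap, Prod.snd_swap, mul_comm (y ^ _)]
        rw [Nat.sum_antidiagonal_eq_sum_range_succ (fun i j => (x + y) ^ i * y ^ j)]
    _ ≤ (∑ i ∈ range (m + 1), (x + y) ^ i * y ^ (m - i)) * x + y ^ (m + 1) :=
        le_add_of_nonneg_right (pow_nonneg hy _)
    _ = (x + y) ^ (m + 1) := by simpa using geom_sum₂_mul_add x y (m + 1)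

namespace PowerSeries

def GevreyBound {R : Type*} [Semiring R] [Norm R] (C₁ C₂ : ℝ) (x : R⟦X⟧) : Prop :=
  ∀ k, ‖coeff k x‖ ≤ C₁ * C₂ ^ k * k !

section SeminormedRing

variable {R : Type*} [SeminormedRing R] {C₁ C₂ D₁ D₂ : ℝ} {x y : R⟦X⟧}

lemma norm_coeff_mul_le (x y : R⟦X⟧) (n : ℕ) :
    ‖coeff n (x * y)‖ ≤ ∑ p ∈ antidiagonal n, ‖coeff p.1 x‖ * ‖coeff p.2 y‖ := by
  rw [coeff_mul]
  exact (norm_sum_le _ _).trans (sum_le_sum fun p _ => norm_mul_le _ _)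

lemma GevreyBound.nonneg (h : GevreyBound C₁ C₂ x) : 0 ≤ C₁ := by
  simpa using (norm_nonneg _).trans (h 0)

lemma GevreyBound.mono_right (h : GevreyBound C₁ C₂ x) (hC₂ : 0 ≤ C₂) (hD₂ : C₂ ≤ D₂) :
    GevreyBound C₁ D₂ x := fun k =>
  (h k).trans <| by gcongr; exact h.nonneg

lemma GevreyBound.mul (hx : GevreyBound C₁ C₂ x) (hy : GevreyBound D₁ C₂ y) (hC₂ : 0 ≤ C₂) :
    GevreyBound (C₁ * D₁) (2 * C₂) (x * y) := by
  have hC₁ := hx.nonneg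
  have hD₁ := hy.nonneg
  intro n
  have hterm : ∀ p ∈ antidiagonal n, ‖coeff p.1 x‖ * ‖coeff p.2 y‖ ≤ C₁ * D₁ * C₂ ^ n * n ! := by
    intro p hp
    rw [HasAntidiagonal.mem_antidiagonal] at hp
    have hfac : (p.1 ! * p.2 ! : ℝ) ≤ n ! := by
      rw [← hp]; exact_mod_cast Nat.factorial_mul_factorial_le_factorial_add _ _
    calc ‖coeff p.1 x‖ * ‖coeff p.2 y‖
        ≤ (C₁ * C₂ ^ p.1 * p.1 !) * (D₁ * C₂ ^ p.2 * p.2 !) :=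
          mul_le_mul (hx _) (hy _) (norm_nonneg _) ((norm_nonneg _).trans (hx _))
      _ = C₁ * D₁ * C₂ ^ n * (p.1 ! * p.2 ! : ℝ) := by rw [← hp, pow_add]; ring
      _ ≤ C₁ * D₁ * C₂ ^ n * n ! := by gcongr
  calc ‖coeff n (x * y)‖
      ≤ ∑ _p ∈ antidiagonal n, C₁ * D₁ * C₂ ^ n * n ! :=
        (norm_coeff_mul_le x y n).trans (sum_le_sum hterm)
    _ = (n + 1 : ℝ) * (C₁ * D₁ * C₂ ^ n * n !) := by simp
    _ ≤ 2 ^ n * (C₁ * D₁ * C₂ ^ n * n !) := by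
        gcongr; exact_mod_cast n.lt_two_pow_self
    _ = C₁ * D₁ * (2 * C₂) ^ n * n ! := by ring

end SeminormedRing

lemma coeff_succ_inv {k : Type*} [Field k] (x : k⟦X⟧) (m : ℕ) :
    coeff (m + 1) x⁻¹ =
      -(constantCoeff x)⁻¹ * ∑ p ∈ antidiagonal m, coeff (p.1 + 1) x * coeff p.2 x⁻¹ := by
  rw [coeff_inv, if_neg m.succ_ne_zero, Nat.sum_antidiagonal_succ, if_neg (lt_irrefl _), zero_add]
  congr 1
  refine sum_congr rfl fun p hp => if_pos ?_
  rw [HasAntidiagonal.mem_antidiagonal] at hp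
  dsimp only
  omega

lemma GevreyBound.inv {𝕜 : Type*} [NormedField 𝕜] {C₁ C₂ : ℝ} {x : 𝕜⟦X⟧}
    (hx : GevreyBound C₁ C₂ x) (hC₂ : 0 ≤ C₂) :
    GevreyBound ‖constantCoeff x‖⁻¹ (C₁ * ‖constantCoeff x‖⁻¹ * C₂ + C₂) x⁻¹ := by
  set A := ‖constantCoeff x‖⁻¹
  set K := C₁ * A * C₂ + C₂
  have hC₁ := hx.nonneg
  intro n
  induction n using Nat.strong_induction_on with | _ n ih => ?_
  rcases n with _ | m
  · simp [A, coeff_inv]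
  · have hterm : ∀ p ∈ antidiagonal m, ‖coeff (p.1 + 1) x‖ * ‖coeff p.2 x⁻¹‖ ≤
        (m + 1)! * (C₁ * A * C₂ * (C₂ ^ p.1 * K ^ p.2)) := by
      intro p hp
      rw [HasAntidiagonal.mem_antidiagonal] at hp
      have hfac : ((p.1 + 1)! * p.2 ! : ℝ) ≤ (m + 1)! := by
        rw [← hp, add_right_comm]; exact_mod_cast Nat.factorial_mul_factorial_le_factorial_add _ _
      calc ‖coeff (p.1 + 1) x‖ * ‖coeff p.2 x⁻¹‖
          ≤ (C₁ * C₂ ^ (p.1 + 1) * (p.1 + 1)!) * (A * K ^ p.2 * p.2 !) :=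
            mul_le_mul (hx _) (ih _ (by omega)) (norm_nonneg _) ((norm_nonneg _).trans (hx _))
        _ = ((p.1 + 1)! * p.2 ! : ℝ) * (C₁ * A * C₂ * (C₂ ^ p.1 * K ^ p.2)) := by ring
        _ ≤ (m + 1)! * (C₁ * A * C₂ * (C₂ ^ p.1 * K ^ p.2)) := by gcongr
    calc ‖coeff (m + 1) x⁻¹‖
        ≤ A * ∑ p ∈ antidiagonal m, ‖coeff (p.1 + 1) x‖ * ‖coeff p.2 x⁻¹‖ := by
          rw [coeff_succ_inv, norm_mul, norm_neg, norm_inv]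
          gcongr
          exact (norm_sum_le _ _).trans_eq (by simp only [norm_mul])
      _ ≤ A * ((m + 1)! * (C₁ * A * C₂ * ∑ p ∈ antidiagonal m, C₂ ^ p.1 * K ^ p.2)) := by
          gcongr A * ?_
          rw [mul_sum, mul_sum]
          exact sum_le_sum hterm
      _ ≤ A * ((m + 1)! * K ^ (m + 1)) := by
          have := mul_sum_antidiagonal_pow_mul_add_pow_le (C₁ * A * C₂) hC₂ m
          gcongr
      _ = A * K ^ (m + 1) * (m + 1)! := by ring

end PowerSeries

open PowerSeries

lemma gevrey1_mul {x y : ℂ⟦X⟧} (hx : Gevrey1 x) (hy : Gevrey1 y) : Gevrey1 (x * y) := by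
  obtain ⟨C₁, C₂, hC₁, hC₂, hx : GevreyBound C₁ C₂ x⟩ := hx
  obtain ⟨D₁, D₂, hD₁, hD₂, hy : GevreyBound D₁ D₂ y⟩ := hy
  exact ⟨C₁ * D₁, 2 * max C₂ D₂, by positivity, by positivity,
    (hx.mono_right hC₂.le (le_max_left _ _)).mul (hy.mono_right hD₂.le (le_max_right _ _))
      (by positivity)⟩

lemma gevrey1_inv {x : ℂ⟦X⟧} (hx : Gevrey1 x) (h0 : constantCoeff x ≠ 0) : Gevrey1 x⁻¹ := by
  obtain ⟨C₁, C₂, hC₁, hC₂, hx : GevreyBound C₁ C₂ x⟩ := hx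
  exact ⟨_, _, by positivity, by positivity, hx.inv hC₂.le⟩

/-- The ring `ℂ{{z}}` of Gevrey series of order 1 is a subring of `ℂ[[z]]`
(closed under the Cauchy product) and is a local ring: a Gevrey series of order 1
is invertible in `ℂ{{z}}` if and only if its constant term is nonzero. -/
theorem gevrey1_localRing :
    (∀ x y : PowerSeries ℂ, Gevrey1 x → Gevrey1 y → Gevrey1 (x * y)) ∧
    (∀ x : PowerSeries ℂ, Gevrey1 x →
      ((∃ y : PowerSeries ℂ, Gevrey1 y ∧ x * y = 1) ↔ PowerSeries.coeff 0 x ≠ 0)) := by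
  refine ⟨fun x y => gevrey1_mul, fun x hx => ?_⟩
  rw [coeff_zero_eq_constantCoeff_apply]
  refine ⟨fun ⟨y, _, hxy⟩ h0 => ?_,
    fun h0 => ⟨x⁻¹, gevrey1_inv hx h0, PowerSeries.mul_inv_cancel x h0⟩⟩
  simpa [h0] using congrArg constantCoeff hxy
end

section
/- The lattice Λ of the refined fan sequence is generated by the classes d(k₁,k₂): with notation as in the paper, let 𝕆 = Σ_{k ∈ N ∩ |Σ|} ℤ·(Ψ(k), k) ⊆ ℚ^m ⊕ N and Λ = {(λ,0) ∈ 𝕆} ⊆ ℚ^m. Then for all k₁, k₂ ∈ N ∩ |Σ|, the element d(k₁,k₂) := Ψ(k₁) + Ψ(k₂) − Ψ(k₁+k₂) lies in Λ, and Λ = Σ_{k₁,k₂ ∈ N ∩ |Σ|} ℤ·d(k₁,k₂). -/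
open scoped BigOperators

/-- Combinatorial data of a (stacky) fan: a finitely generated abelian group `N` with
its realification map `bar : N → N_ℝ = V`, ray generators `b₁,…,b_m ∈ N`, and a finite
collection of cones, each identified (as in the paper) with the subset of
`{1,…,m}` indexing its rays. -/
structure FanData (N V : Type*) [AddCommGroup N] [AddCommGroup V] [Module ℝ V]
    (m : ℕ) where
  bar : N →+ V
  b : Fin m → N
  cones : Finset (Finset (Fin m))

namespace FanData

variable {N V : Type*} [AddCommGroup N] [AddCommGroup V] [Module ℝ V] {m : ℕ}
variable (F : FanData N V m)

/-- The cone of `V` spanned by the rays indexed by `σ`. -/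
def coneSet (σ : Finset (Fin m)) : Set V :=
  {x | ∃ c : Fin m → ℝ, (∀ i, 0 ≤ c i) ∧ (∀ i, i ∉ σ → c i = 0) ∧
      x = ∑ i, c i • F.bar (F.b i)}

/-- The support `|Σ|` of the fan. -/
def support : Set V := ⋃ σ ∈ F.cones, F.coneSet σ

/-- The set `N ∩ |Σ|` of lattice points of the support. -/
def latticePts : Set N := {k | F.bar k ∈ F.support}

/-- Simpliciality: the rays of each cone are linearly independent. -/
def Simplicial : Prop :=
  ∀ σ ∈ F.cones, LinearIndependent ℝ (fun i : σ => F.bar (F.b (i : Fin m)))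

/-- The collection of cones is closed under passing to faces. -/
def FacesClosed : Prop := ∀ σ ∈ F.cones, ∀ τ, τ ⊆ σ → τ ∈ F.cones

/-- Two cones of the fan meet along a common face. -/
def MeetsInFaces : Prop :=
  ∀ σ ∈ F.cones, ∀ τ ∈ F.cones, ∀ x ∈ F.coneSet σ, x ∈ F.coneSet τ →
    x ∈ F.coneSet (σ ∩ τ)

/-- `Ψ : N ∩ |Σ| → (ℚ_{≥0})^m` records the (unique, by simpliciality) nonnegative
barycentric coordinates of `k̄` on the rays of its minimal cone: `Ψ(k) ≥ 0`,
`k̄ = Σᵢ Ψᵢ(k) b̄ᵢ`, and the support of `Ψ(k)` is contained in every cone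
containing `k̄` (Notation 2.2 of the paper). -/
def IsPsi (Ψ : N → Fin m → ℚ) : Prop :=
  ∀ k ∈ F.latticePts,
    (∀ i, 0 ≤ Ψ k i) ∧
    (F.bar k = ∑ i, (Ψ k i : ℝ) • F.bar (F.b i)) ∧
    (∀ σ ∈ F.cones, F.bar k ∈ F.coneSet σ → ∀ i, Ψ k i ≠ 0 → i ∈ σ)

/-- The subgroup `𝕆 = Σ_{k ∈ N ∩ |Σ|} ℤ·(Ψ(k), k) ⊆ ℚ^m ⊕ N`. -/
def OO (Ψ : N → Fin m → ℚ) : AddSubgroup ((Fin m → ℚ) × N) :=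
  AddSubgroup.closure {p | ∃ k ∈ F.latticePts, p = (Ψ k, k)}

/-- The lattice `Λ = {(λ, 0) ∈ 𝕆} ⊆ ℚ^m` of the refined fan sequence. -/
def Lam (Ψ : N → Fin m → ℚ) : AddSubgroup (Fin m → ℚ) :=
  (F.OO Ψ).comap (AddMonoidHom.inl (Fin m → ℚ) N)

end FanData

/-!
Modulo the subgroup `D` generated by the defects `f a + f b - f (a + b)`, the function `f` is
additive on the additively closed set `S`. Hence every element `p` of the group generated by
the graph points `(f k, k)` can be written with `p.2 = k₁ - k₂` and `p.1 ≡ f k₁ - f k₂ mod D`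
for some `k₁, k₂ ∈ S`; if `p.2 = 0` then `k₁ = k₂`, so `p.1 ∈ D`.
-/

section GraphClosure

variable {G A : Type*} [AddCommGroup G] [AddCommGroup A] (S : Set A) (f : A → G)

def graphClosure : AddSubgroup (G × A) :=
  AddSubgroup.closure {p | ∃ k ∈ S, p = (f k, k)}

def defectClosure : AddSubgroup G :=
  AddSubgroup.closure {x | ∃ a ∈ S, ∃ b ∈ S, x = f a + f b - f (a + b)}

variable {S f}

theorem add_sub_mem_defectClosure {a b : A} (ha : a ∈ S) (hb : b ∈ S) :
    f a + f b - f (a + b) ∈ defectClosure S f :=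
  AddSubgroup.subset_closure ⟨a, ha, b, hb, rfl⟩

theorem mk_add_sub_zero_mem_graphClosure {a b : A} (ha : a ∈ S) (hb : b ∈ S)
    (hab : a + b ∈ S) : (f a + f b - f (a + b), (0 : A)) ∈ graphClosure S f := by
  have hgen : ∀ k ∈ S, (f k, k) ∈ graphClosure S f :=
    fun k hk => AddSubgroup.subset_closure ⟨k, hk, rfl⟩
  have h := sub_mem (add_mem (hgen a ha) (hgen b hb)) (hgen (a + b) hab)
  rwa [Prod.mk_add_mk, Prod.mk_sub_mk, sub_self] at h

theorem exists_sub_of_mem_graphClosure (hS : ∀ a ∈ S, ∀ b ∈ S, a + b ∈ S)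
    (hne : S.Nonempty) {p : G × A} (hp : p ∈ graphClosure S f) :
    ∃ k₁ ∈ S, ∃ k₂ ∈ S, p.2 = k₁ - k₂ ∧ p.1 - (f k₁ - f k₂) ∈ defectClosure S f := by
  induction hp using AddSubgroup.closure_induction with
  | mem p hp =>
    obtain ⟨k, hk, rfl⟩ := hp
    refine ⟨k + k, hS k hk k hk, k, hk, by abel, ?_⟩
    convert add_sub_mem_defectClosure (f := f) hk hk using 1
    abel
  | zero =>
    obtain ⟨s, hs⟩ := hne
    exact ⟨s, hs, s, hs, by simp, by simp⟩
  | add p q _ _ ihp ihq =>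
    obtain ⟨k₁, hk₁, k₂, hk₂, hp2, hp1⟩ := ihp
    obtain ⟨l₁, hl₁, l₂, hl₂, hq2, hq1⟩ := ihq
    refine ⟨k₁ + l₁, hS _ hk₁ _ hl₁, k₂ + l₂, hS _ hk₂ _ hl₂, ?_, ?_⟩
    · rw [Prod.snd_add, hp2, hq2]
      abel
    · convert add_mem (add_mem hp1 hq1) (sub_mem (add_sub_mem_defectClosure hk₁ hl₁)
        (add_sub_mem_defectClosure hk₂ hl₂)) using 1
      rw [Prod.fst_add]
      abel
  | neg p _ ih =>
    obtain ⟨k₁, hk₁, k₂, hk₂, hp2, hp1⟩ := ih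
    refine ⟨k₂, hk₂, k₁, hk₁, by rw [Prod.snd_neg, hp2, neg_sub], ?_⟩
    convert neg_mem hp1 using 1
    rw [Prod.fst_neg]
    abel

theorem comap_inl_graphClosure (hS : ∀ a ∈ S, ∀ b ∈ S, a + b ∈ S) :
    (graphClosure S f).comap (AddMonoidHom.inl G A) = defectClosure S f := by
  refine le_antisymm (fun x hx => ?_) ?_
  · rcases S.eq_empty_or_nonempty with rfl | hne
    · obtain rfl : x = 0 := by simpa [graphClosure] using hx
      exact zero_mem _
    obtain ⟨k₁, -, k₂, -, hk, hdef⟩ := exists_sub_of_mem_graphClosure hS hne hx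
    rwa [AddMonoidHom.inl_apply, sub_eq_zero.mp hk.symm, sub_self, sub_zero] at hdef
  · rw [defectClosure, AddSubgroup.closure_le]
    rintro x ⟨a, ha, b, hb, rfl⟩
    exact mk_add_sub_zero_mem_graphClosure ha hb (hS a ha b hb)

end GraphClosure

theorem FanData.lam_generated_by_d_general
    {N V : Type*} [AddCommGroup N] [AddCommGroup V] [Module ℝ V] {m : ℕ}
    (F : FanData N V m)
    (hadd : ∀ k ∈ F.latticePts, ∀ l ∈ F.latticePts, k + l ∈ F.latticePts)
    (Ψ : N → Fin m → ℚ) :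
    (∀ k₁ ∈ F.latticePts, ∀ k₂ ∈ F.latticePts,
        Ψ k₁ + Ψ k₂ - Ψ (k₁ + k₂) ∈ F.Lam Ψ) ∧
    F.Lam Ψ = AddSubgroup.closure
      {x : Fin m → ℚ | ∃ k₁ ∈ F.latticePts, ∃ k₂ ∈ F.latticePts,
        x = Ψ k₁ + Ψ k₂ - Ψ (k₁ + k₂)} := by
  have hLam : F.Lam Ψ = defectClosure F.latticePts Ψ := comap_inl_graphClosure hadd
  exact ⟨fun k₁ h₁ k₂ h₂ => hLam ▸ add_sub_mem_defectClosure h₁ h₂, hLam⟩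

/-- The lattice `Λ` of the refined fan sequence is generated by the classes
`d(k₁,k₂) = Ψ(k₁) + Ψ(k₂) − Ψ(k₁+k₂)`: each `d(k₁,k₂)` lies in `Λ`, and
`Λ = Σ_{k₁,k₂ ∈ N ∩ |Σ|} ℤ·d(k₁,k₂)`. -/
theorem FanData.lam_generated_by_d
    {N V : Type*} [AddCommGroup N] [AddCommGroup V] [Module ℝ V] {m : ℕ}
    (F : FanData N V m) (hsimp : F.Simplicial) (hfaces : F.FacesClosed)
    (hmeet : F.MeetsInFaces)
    (hadd : ∀ k ∈ F.latticePts, ∀ l ∈ F.latticePts, k + l ∈ F.latticePts)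
    (Ψ : N → Fin m → ℚ) (hΨ : F.IsPsi Ψ) :
    (∀ k₁ ∈ F.latticePts, ∀ k₂ ∈ F.latticePts,
        Ψ k₁ + Ψ k₂ - Ψ (k₁ + k₂) ∈ F.Lam Ψ) ∧
    F.Lam Ψ = AddSubgroup.closure
      {x : Fin m → ℚ | ∃ k₁ ∈ F.latticePts, ∃ k₂ ∈ F.latticePts,
        x = Ψ k₁ + Ψ k₂ - Ψ (k₁ + k₂)} :=
  FanData.lam_generated_by_d_general F hadd Ψ
end

section
/- The element v(λ) associated to an extended lattice relation is a box element: let λ = (λ_i, λ_k : 1 ≤ i ≤ m, k ∈ G) ∈ ℚ^m × ℤ^G satisfy Σᵢ λᵢ b̄ᵢ + Σ_{k∈G} λ_k k̄ = 0 in N_ℝ, and suppose that the set {i : λᵢ ∉ ℤ} spans a cone of Σ. Define v(λ) := Σᵢ ⌈λᵢ⌉ bᵢ + Σ_{k∈G} λ_k k ∈ N. Then the image of v(λ) in N_ℝ is v(λ)‾ = Σ_{i=1}^m {−λᵢ} b̄ᵢ, where {x} denotes the fractional part, and consequently v(λ) lies in the box Box of the stacky fan (i.e. v(λ)‾ lies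 in a cone σ of Σ with coefficients in [0,1) on the rays of σ). -/
open scoped BigOperators

namespace FanData

variable {N V : Type*} [AddCommGroup N] [AddCommGroup V] [Module ℝ V] {m : ℕ}
variable (F : FanData N V m)

/-- The box of the stacky fan: `v ∈ Box` iff `v̄` lies in some cone `σ ∈ Σ` with
coefficients in `[0,1)` on the rays of `σ`. -/
def box : Set N :=
  {v | ∃ σ ∈ F.cones, ∃ c : Fin m → ℚ, (∀ i, 0 ≤ c i) ∧ (∀ i, c i < 1) ∧
      (∀ i ∉ σ, c i = 0) ∧ F.bar v = ∑ i, (c i : ℝ) • F.bar (F.b i)}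

end FanData

/-- The element `v(λ) = Σᵢ ⌈λᵢ⌉ bᵢ + Σ_{k∈G} λ_k k` associated to an extended lattice
relation `λ ∈ K^G₀` (i.e. `Σᵢ λᵢ b̄ᵢ + Σ_{k∈G} λ_k k̄ = 0` with `{i : λᵢ ∉ ℤ}`
spanning a cone of `Σ`) satisfies `v(λ)‾ = Σᵢ {−λᵢ} b̄ᵢ` (`{·}` the fractional part),
and consequently `v(λ)` lies in the box of the stacky fan. -/
theorem FanData.v_lambda_mem_box
    {N V : Type*} [AddCommGroup N] [AddCommGroup V] [Module ℝ V] {m : ℕ}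
    (F : FanData N V m) (hsimp : F.Simplicial)
    (G : Finset N) (hG : ∀ k ∈ G, k ∈ F.latticePts)
    (lam : Fin m → ℚ) (lamG : N → ℤ)
    (hrel : (∑ i, (lam i : ℝ) • F.bar (F.b i)) +
        ∑ k ∈ G, (lamG k : ℝ) • F.bar k = 0)
    (σ : Finset (Fin m)) (hσ : σ ∈ F.cones)
    (hint : ∀ i, (lam i).den ≠ 1 → i ∈ σ) :
    F.bar (∑ i, ⌈lam i⌉ • F.b i + ∑ k ∈ G, lamG k • k) =
      ∑ i, ((Int.fract (-(lam i)) : ℚ) : ℝ) • F.bar (F.b i) ∧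
    (∑ i, ⌈lam i⌉ • F.b i + ∑ k ∈ G, lamG k • k) ∈ F.box := by
  have key : F.bar (∑ i, ⌈lam i⌉ • F.b i + ∑ k ∈ G, lamG k • k) =
      ∑ i, ((Int.fract (-(lam i)) : ℚ) : ℝ) • F.bar (F.b i) := by
    have h1 : F.bar (∑ i, ⌈lam i⌉ • F.b i + ∑ k ∈ G, lamG k • k)
        = ∑ i, (⌈lam i⌉ : ℝ) • F.bar (F.b i) + ∑ k ∈ G, (lamG k : ℝ) • F.bar k := by
      simp [map_add, map_sum, map_zsmul, Int.cast_smul_eq_zsmul]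
    have h2 : ∑ k ∈ G, (lamG k : ℝ) • F.bar k
        = - ∑ i, (lam i : ℝ) • F.bar (F.b i) := eq_neg_of_add_eq_zero_right hrel
    rw [h1, h2, ← sub_eq_add_neg, ← Finset.sum_sub_distrib]
    refine Finset.sum_congr rfl fun i _ => ?_
    rw [← sub_smul]
    congr 1
    have : Int.fract (-(lam i)) = (⌈lam i⌉ : ℚ) - lam i := by
      rw [Int.fract, Int.floor_neg]; push_cast; ring
    rw [this]; push_cast; ring
  refine ⟨key, σ, hσ, fun i => Int.fract (-(lam i)), fun i => Int.fract_nonneg _,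
    fun i => Int.fract_lt_one _, fun i hi => ?_, key⟩
  have hden : (lam i).den = 1 := by
    by_contra h; exact hi (hint i h)
  have h3 : (((lam i).num : ℚ)) = lam i := by
    exact_mod_cast Rat.den_eq_one_iff _ |>.mp hden
  show Int.fract (-lam i) = 0
  rw [← h3, ← Int.cast_neg, Int.fract_intCast]
end

section
/- The Chen–Ruan-type product on the span of box/lattice generators is associative: let Σ be a simplicial fan in N_ℝ and define on the free ℂ-module ⊕_{k ∈ N ∩ |Σ|} ℂ φ_k the product φ_{k₁} · φ_{k₂} = φ_{k₁+k₂} if k̄₁ and k̄₂ lie in a common cone of Σ, and 0 otherwise. Then this product is commutative and associative. -/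
open scoped BigOperators

open Classical in
/-- The Chen–Ruan-type product on `⊕_{k ∈ N ∩ |Σ|} ℂ φ_k`:
`φ_{k₁} · φ_{k₂} = φ_{k₁+k₂}` if `k̄₁, k̄₂` lie in a common cone of `Σ`, and `0`
otherwise (extended bilinearly to finitely supported functions). -/
noncomputable def FanData.crMul
    {N V : Type*} [AddCommGroup N] [AddCommGroup V] [Module ℝ V] {m : ℕ}
    (F : FanData N V m) (f g : N →₀ ℂ) : N →₀ ℂ :=
  f.sum fun k a => g.sum fun l b =>
    if ∃ σ ∈ F.cones, F.bar k ∈ F.coneSet σ ∧ F.bar l ∈ F.coneSet σ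
    then Finsupp.single (k + l) (a * b) else 0

/-!
Both bracketings of `φ_{k₁} · φ_{k₂} · φ_{k₃}` equal `φ_{k₁+k₂+k₃}` when `k̄₁, k̄₂, k̄₃` lie in
one cone and `0` otherwise. For `(φ_{k₁} · φ_{k₂}) · φ_{k₃}`: if `k̄₁, k̄₂ ∈ σ` and
`k̄₁ + k̄₂, k̄₃ ∈ τ`, then `k̄₁ + k̄₂ ∈ σ ∩ τ` since cones meet in faces, and as the rays of `σ`
are linearly independent, `σ ∩ τ` spans a face of `σ`, which therefore contains `k̄₁` and `k̄₂`;
so `τ` contains all three. The other bracketing is the mirror image.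
-/

theorem LinearIndependent.eq_of_sum_smul_eq {ι R M : Type*} [Fintype ι] [Ring R]
    [AddCommGroup M] [Module R M] {s : Finset ι} {v : ι → M}
    (hv : LinearIndependent R (fun i : s => v i)) {c e : ι → R}
    (hc : ∀ i ∉ s, c i = 0) (he : ∀ i ∉ s, e i = 0)
    (h : ∑ i, c i • v i = ∑ i, e i • v i) : c = e := by
  have sum_eq_sum_subtype : ∀ f : ι → R, (∀ i ∉ s, f i = 0) →
      ∑ i, f i • v i = ∑ i : s, f i • v i := fun f hf => by
    rw [Finset.sum_coe_sort s (fun i => f i • v i)]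
    exact (Finset.sum_subset (Finset.subset_univ s) fun i _ hi => by simp [hf i hi]).symm
  funext i
  by_cases hi : i ∈ s
  · rw [sum_eq_sum_subtype c hc, sum_eq_sum_subtype e he] at h
    exact hv.eq_coords_of_eq (f := fun j : s => c j) (g := fun j : s => e j) h ⟨i, hi⟩
  · rw [hc i hi, he i hi]

namespace FanData

variable {N V : Type*} [AddCommGroup N] [AddCommGroup V] [Module ℝ V] {m : ℕ}
variable (F : FanData N V m)

theorem coneSet_mono {σ τ : Finset (Fin m)} (h : σ ⊆ τ) : F.coneSet σ ⊆ F.coneSet τ := by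
  rintro x ⟨c, hc0, hcσ, rfl⟩
  exact ⟨c, hc0, fun i hi => hcσ i fun hiσ => hi (h hiσ), rfl⟩

theorem add_mem_coneSet {σ : Finset (Fin m)} {x y : V}
    (hx : x ∈ F.coneSet σ) (hy : y ∈ F.coneSet σ) : x + y ∈ F.coneSet σ := by
  obtain ⟨c, hc0, hcσ, rfl⟩ := hx
  obtain ⟨d, hd0, hdσ, rfl⟩ := hy
  refine ⟨c + d, fun i => add_nonneg (hc0 i) (hd0 i), fun i hi => by simp [hcσ i hi, hdσ i hi], ?_⟩
  simp only [Pi.add_apply, add_smul, Finset.sum_add_distrib]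

/-- When the rays of `σ` are linearly independent, `coneSet ρ` is a face of `coneSet σ`. -/
theorem mem_coneSet_of_add_mem {σ ρ : Finset (Fin m)}
    (hσ : LinearIndependent ℝ (fun i : σ => F.bar (F.b (i : Fin m)))) (hρσ : ρ ⊆ σ) {x y : V}
    (hx : x ∈ F.coneSet σ) (hy : y ∈ F.coneSet σ) (hxy : x + y ∈ F.coneSet ρ) :
    x ∈ F.coneSet ρ := by
  obtain ⟨c, hc0, hcσ, rfl⟩ := hx
  obtain ⟨d, hd0, hdσ, rfl⟩ := hy
  obtain ⟨e, -, heρ, he⟩ := hxy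
  have hcde : c + d = e := by
    refine LinearIndependent.eq_of_sum_smul_eq (v := fun i => F.bar (F.b i)) hσ
      (fun i hi => ?_) (fun i hi => ?_) ?_
    · rw [Pi.add_apply, hcσ i hi, hdσ i hi, add_zero]
    · exact heρ i fun hiρ => hi (hρσ hiρ)
    · simp only [← he, Pi.add_apply, add_smul, Finset.sum_add_distrib]
  refine ⟨c, hc0, fun i hi => ?_, rfl⟩
  have hcdi : c i + d i = 0 := by rw [← Pi.add_apply, hcde, heρ i hi]
  linarith [hc0 i, hd0 i]

def SameCone (x y : V) : Prop := ∃ σ ∈ F.cones, x ∈ F.coneSet σ ∧ y ∈ F.coneSet σ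

theorem sameCone_comm (x y : V) : F.SameCone x y ↔ F.SameCone y x :=
  exists_congr fun _ => and_congr_right' and_comm

variable {F}

theorem sameCone_and_sameCone_add_iff (hsimp : F.Simplicial) (hmeet : F.MeetsInFaces)
    {x y z : V} :
    F.SameCone x y ∧ F.SameCone (x + y) z ↔
      ∃ τ ∈ F.cones, x ∈ F.coneSet τ ∧ y ∈ F.coneSet τ ∧ z ∈ F.coneSet τ := by
  constructor
  · rintro ⟨⟨σ, hσ, hxσ, hyσ⟩, ⟨τ, hτ, hxyτ, hzτ⟩⟩
    have hxyστ : x + y ∈ F.coneSet (σ ∩ τ) :=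
      hmeet σ hσ τ hτ _ (F.add_mem_coneSet hxσ hyσ) hxyτ
    have hxστ := F.mem_coneSet_of_add_mem (hsimp σ hσ) Finset.inter_subset_left hxσ hyσ hxyστ
    have hyστ := F.mem_coneSet_of_add_mem (hsimp σ hσ) Finset.inter_subset_left hyσ hxσ
      (add_comm x y ▸ hxyστ)
    exact ⟨τ, hτ, F.coneSet_mono Finset.inter_subset_right hxστ,
      F.coneSet_mono Finset.inter_subset_right hyστ, hzτ⟩
  · rintro ⟨τ, hτ, hxτ, hyτ, hzτ⟩
    exact ⟨⟨τ, hτ, hxτ, hyτ⟩, ⟨τ, hτ, F.add_mem_coneSet hxτ hyτ, hzτ⟩⟩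

theorem sameCone_and_sameCone_add_iff' (hsimp : F.Simplicial) (hmeet : F.MeetsInFaces)
    {x y z : V} :
    F.SameCone y z ∧ F.SameCone x (y + z) ↔
      ∃ τ ∈ F.cones, x ∈ F.coneSet τ ∧ y ∈ F.coneSet τ ∧ z ∈ F.coneSet τ := by
  rw [F.sameCone_comm y, F.sameCone_comm x, add_comm, sameCone_and_sameCone_add_iff hsimp hmeet]
  exact exists_congr fun _ => by tauto

variable (F)

theorem crMul_zero_left (g : N →₀ ℂ) : F.crMul 0 g = 0 :=
  Finsupp.sum_zero_index

theorem crMul_zero_right (f : N →₀ ℂ) : F.crMul f 0 = 0 := by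
  simp [crMul]

theorem crMul_add_left (f₁ f₂ g : N →₀ ℂ) :
    F.crMul (f₁ + f₂) g = F.crMul f₁ g + F.crMul f₂ g := by
  refine Finsupp.sum_add_index' (fun k => by simp) fun k a₁ a₂ => ?_
  rw [← Finsupp.sum_add]
  refine Finsupp.sum_congr fun l _ => ?_
  split <;> simp [add_mul]

theorem crMul_add_right (f g₁ g₂ : N →₀ ℂ) :
    F.crMul f (g₁ + g₂) = F.crMul f g₁ + F.crMul f g₂ := by
  rw [crMul, crMul, crMul, ← Finsupp.sum_add]
  refine Finsupp.sum_congr fun k _ => Finsupp.sum_add_index' (fun l => ?_) fun l b₁ b₂ => ?_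
  · split <;> simp
  · split <;> simp [mul_add]

open Classical in
theorem crMul_single_single (k l : N) (a b : ℂ) :
    F.crMul (Finsupp.single k a) (Finsupp.single l b) =
      if F.SameCone (F.bar k) (F.bar l) then Finsupp.single (k + l) (a * b) else 0 := by
  rw [crMul, Finsupp.sum_single_index (by simp), Finsupp.sum_single_index (by simp)]
  exact if_congr Iff.rfl rfl rfl

open Classical in
theorem crMul_crMul_single_single_single (hsimp : F.Simplicial) (hmeet : F.MeetsInFaces)
    (k₁ k₂ k₃ : N) (a b c : ℂ) :
    F.crMul (F.crMul (Finsupp.single k₁ a) (Finsupp.single k₂ b)) (Finsupp.single k₃ c) =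
      if ∃ τ ∈ F.cones, F.bar k₁ ∈ F.coneSet τ ∧ F.bar k₂ ∈ F.coneSet τ ∧ F.bar k₃ ∈ F.coneSet τ
      then Finsupp.single (k₁ + k₂ + k₃) (a * b * c) else 0 := by
  have key := sameCone_and_sameCone_add_iff (x := F.bar k₁) (y := F.bar k₂) (z := F.bar k₃)
    hsimp hmeet
  by_cases h₁₂ : F.SameCone (F.bar k₁) (F.bar k₂)
  · rw [crMul_single_single, if_pos h₁₂, crMul_single_single, map_add]
    exact if_congr ((and_iff_right h₁₂).symm.trans key) rfl rfl
  · rw [crMul_single_single, if_neg h₁₂, crMul_zero_left, if_neg fun h => h₁₂ (key.2 h).1]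

open Classical in
theorem crMul_single_crMul_single_single (hsimp : F.Simplicial) (hmeet : F.MeetsInFaces)
    (k₁ k₂ k₃ : N) (a b c : ℂ) :
    F.crMul (Finsupp.single k₁ a) (F.crMul (Finsupp.single k₂ b) (Finsupp.single k₃ c)) =
      if ∃ τ ∈ F.cones, F.bar k₁ ∈ F.coneSet τ ∧ F.bar k₂ ∈ F.coneSet τ ∧ F.bar k₃ ∈ F.coneSet τ
      then Finsupp.single (k₁ + k₂ + k₃) (a * b * c) else 0 := by
  have key := sameCone_and_sameCone_add_iff' (x := F.bar k₁) (y := F.bar k₂) (z := F.bar k₃)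
    hsimp hmeet
  by_cases h₂₃ : F.SameCone (F.bar k₂) (F.bar k₃)
  · rw [crMul_single_single F k₂, if_pos h₂₃, crMul_single_single, map_add, ← add_assoc,
      ← mul_assoc]
    exact if_congr ((and_iff_right h₂₃).symm.trans key) rfl rfl
  · rw [crMul_single_single F k₂, if_neg h₂₃, crMul_zero_right,
      if_neg fun h => h₂₃ (key.2 h).1]

theorem crMul_comm (f g : N →₀ ℂ) : F.crMul f g = F.crMul g f := by
  induction f using Finsupp.induction_linear with
  | zero => rw [crMul_zero_left, crMul_zero_right]
  | add f₁ f₂ ih₁ ih₂ => rw [crMul_add_left, crMul_add_right, ih₁, ih₂]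
  | single k a =>
    induction g using Finsupp.induction_linear with
    | zero => rw [crMul_zero_left, crMul_zero_right]
    | add g₁ g₂ ih₁ ih₂ => rw [crMul_add_left, crMul_add_right, ih₁, ih₂]
    | single l b =>
      classical
      rw [crMul_single_single, crMul_single_single, add_comm k l, mul_comm a b]
      exact if_congr (F.sameCone_comm _ _) rfl rfl

theorem crMul_assoc (hsimp : F.Simplicial) (hmeet : F.MeetsInFaces) (f g h : N →₀ ℂ) :
    F.crMul (F.crMul f g) h = F.crMul f (F.crMul g h) := by
  induction f using Finsupp.induction_linear with
  | zero => rw [crMul_zero_left, crMul_zero_left, crMul_zero_left]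
  | add f₁ f₂ ih₁ ih₂ => rw [crMul_add_left, crMul_add_left, crMul_add_left, ih₁, ih₂]
  | single k₁ a =>
    induction g using Finsupp.induction_linear with
    | zero => rw [crMul_zero_right, crMul_zero_left, crMul_zero_right]
    | add g₁ g₂ ih₁ ih₂ =>
      rw [crMul_add_right, crMul_add_left, crMul_add_left, crMul_add_right, ih₁, ih₂]
    | single k₂ b =>
      induction h using Finsupp.induction_linear with
      | zero => rw [crMul_zero_right, crMul_zero_right, crMul_zero_right]
      | add h₁ h₂ ih₁ ih₂ => rw [crMul_add_right, crMul_add_right, crMul_add_right, ih₁, ih₂]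
      | single k₃ c =>
        rw [crMul_crMul_single_single_single F hsimp hmeet,
          crMul_single_crMul_single_single F hsimp hmeet]

end FanData

theorem FanData.crMul_comm_assoc_general
    {N V : Type*} [AddCommGroup N] [AddCommGroup V] [Module ℝ V] {m : ℕ}
    (F : FanData N V m) (hsimp : F.Simplicial)
    (hmeet : F.MeetsInFaces) :
    (∀ f g : N →₀ ℂ, F.crMul f g = F.crMul g f) ∧
    (∀ f g h : N →₀ ℂ, F.crMul (F.crMul f g) h = F.crMul f (F.crMul g h)) :=
  ⟨F.crMul_comm, F.crMul_assoc hsimp hmeet⟩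

/-- The Chen–Ruan-type product on the span of the lattice generators of a simplicial
fan with convex support is commutative and associative. -/
theorem FanData.crMul_comm_assoc
    {N V : Type*} [AddCommGroup N] [AddCommGroup V] [Module ℝ V] {m : ℕ}
    (F : FanData N V m) (hsimp : F.Simplicial) (hfaces : F.FacesClosed)
    (hmeet : F.MeetsInFaces) (hconv : Convex ℝ F.support) :
    (∀ f g : N →₀ ℂ, F.crMul f g = F.crMul g f) ∧
    (∀ f g h : N →₀ ℂ, F.crMul (F.crMul f g) h = F.crMul f (F.crMul g h)) :=
  FanData.crMul_comm_assoc_general F hsimp hmeet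
end

section
/- Estimate for formal Gaussian asymptotic expansions: let n ≥ 1 and let (e_I)_{I ∈ ℕ^n} be complex numbers with |e_I| ≤ C₁ C₂^{|I|} for constants C₁, C₂ > 0. Define for each k ≥ 0 the coefficient a_k := Σ_{I ∈ ℕ^n, |I| = k} e_{2I} (−1)^{|I|} Π_{a=1}^n (2i_a − 1)!!, where (2j−1)!! = (2j−1)(2j−3)⋯3·1 and (−1)!! = 1. Then |a_k| ≤ C₁ C₂^{2k} 2^k (k+n−1 choose k) k!; in particular Σ_k a_k z^k is a Gevrey series of order 1, i.e. |a_k| ≤ C₁' C₂'^k k! for suitable constants. -/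
/-!
Each term of `a_k` is bounded separately: `|e_{2I}| ≤ C₁ C₂^{2k}`, and
`∏ (2 i_a − 1)‼ ≤ ∏ (2 i_a)‼ = 2^k ∏ i_a! ≤ 2^k k!`, the last step because a multinomial
coefficient is an integer.
There are `(k+n−1 choose k)` multi-indices of degree `k`, and this binomial is at most `2^n 2^k`.
-/

open Finset
open scoped Nat

theorem Nat.doubleFactorial_monotone : Monotone Nat.doubleFactorial := by
  refine monotone_nat_of_le_succ fun n => ?_
  induction n using Nat.twoStepInduction with
  | zero => rfl
  | one => decide
  | more n ih _ =>
    rw [Nat.doubleFactorial_add_two, Nat.doubleFactorial_add_two (n + 1)]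
    exact Nat.mul_le_mul (by omega) ih

theorem Nat.doubleFactorial_two_mul_sub_one_le (j : ℕ) : (2 * j - 1)‼ ≤ 2 ^ j * j ! :=
  Nat.doubleFactorial_two_mul j ▸ Nat.doubleFactorial_monotone (Nat.sub_le _ _)

theorem Finset.prod_doubleFactorial_two_mul_sub_one_le {ι : Type*} (s : Finset ι)
    (I : ι → ℕ) :
    ∏ a ∈ s, (2 * I a - 1)‼ ≤ 2 ^ (∑ a ∈ s, I a) * (∑ a ∈ s, I a)! :=
  calc ∏ a ∈ s, (2 * I a - 1)‼
      ≤ ∏ a ∈ s, 2 ^ I a * (I a)! :=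
        prod_le_prod' fun a _ => Nat.doubleFactorial_two_mul_sub_one_le _
    _ = 2 ^ (∑ a ∈ s, I a) * ∏ a ∈ s, (I a)! := by
        rw [prod_mul_distrib, prod_pow_eq_pow_sum]
    _ ≤ 2 ^ (∑ a ∈ s, I a) * (∑ a ∈ s, I a)! :=
        Nat.mul_le_mul_left _
          (Nat.le_of_dvd (Nat.factorial_pos _) (Nat.prod_factorial_dvd_factorial_sum s I))

theorem Finset.Nat.card_antidiagonalTuple (n k : ℕ) :
    #(antidiagonalTuple n k) = (n + k - 1).choose k := by
  have := card_finsuppAntidiag_nat_eq_choose (s := (univ : Finset (Fin n))) k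
  rw [finsuppAntidiag, card_map, card_attach, piAntidiag_univ_fin_eq_antidiagonalTuple] at this
  simpa using this

section GaussianCoeff

variable {𝕜 : Type*} [RCLike 𝕜] {n : ℕ}

noncomputable def gaussianCoeff (e : (Fin n → ℕ) → 𝕜) (k : ℕ) : 𝕜 :=
  ∑ I ∈ Finset.Nat.antidiagonalTuple n k,
    e (fun a => 2 * I a) * (-1) ^ k * ∏ a, ((2 * I a - 1)‼ : 𝕜)

theorem norm_gaussianCoeff_le {e : (Fin n → ℕ) → 𝕜} {C₁ C₂ : ℝ}
    (he : ∀ I : Fin n → ℕ, ‖e I‖ ≤ C₁ * C₂ ^ (∑ a, I a)) (k : ℕ) :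
    ‖gaussianCoeff e k‖ ≤ C₁ * C₂ ^ (2 * k) * 2 ^ k * (k + n - 1).choose k * k ! := by
  have hterm : ∀ I ∈ Finset.Nat.antidiagonalTuple n k,
      ‖e (fun a => 2 * I a) * (-1) ^ k * ∏ a, ((2 * I a - 1)‼ : 𝕜)‖ ≤
        C₁ * C₂ ^ (2 * k) * (2 ^ k * k !) := by
    intro I hI
    have hIk : ∑ a, I a = k := Finset.Nat.mem_antidiagonalTuple.mp hI
    have he2I : ‖e (fun a => 2 * I a)‖ ≤ C₁ * C₂ ^ (2 * k) := by
      simpa only [← mul_sum, hIk] using he (fun a => 2 * I a)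
    have hprod : ((∏ a, (2 * I a - 1)‼ : ℕ) : ℝ) ≤ 2 ^ k * k ! := by
      exact_mod_cast hIk ▸ prod_doubleFactorial_two_mul_sub_one_le univ I
    rw [norm_mul, norm_mul, norm_pow, norm_neg, norm_one, one_pow, mul_one, ← Nat.cast_prod,
      RCLike.norm_natCast]
    exact mul_le_mul he2I hprod (by positivity) ((norm_nonneg _).trans he2I)
  calc ‖gaussianCoeff e k‖
      ≤ #(Finset.Nat.antidiagonalTuple n k) • (C₁ * C₂ ^ (2 * k) * (2 ^ k * k !)) :=
        (norm_sum_le _ _).trans (sum_le_card_nsmul _ _ _ hterm)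
    _ = C₁ * C₂ ^ (2 * k) * 2 ^ k * (k + n - 1).choose k * k ! := by
        rw [Finset.Nat.card_antidiagonalTuple, nsmul_eq_mul, add_comm n]
        ring

end GaussianCoeff

theorem Nat.choose_add_sub_one_le_two_pow (n k : ℕ) :
    ((k + n - 1).choose k : ℝ) ≤ 2 ^ n * 2 ^ k :=
  calc ((k + n - 1).choose k : ℝ) ≤ 2 ^ (k + n - 1) := by
        exact_mod_cast Nat.choose_le_two_pow _ _
    _ ≤ 2 ^ (k + n) := pow_le_pow_right₀ one_le_two (Nat.sub_le _ _)
    _ = 2 ^ n * 2 ^ k := by rw [pow_add, mul_comm]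

theorem gaussian_asymptotic_estimate_general (n : ℕ) (e : (Fin n → ℕ) → ℂ)
    (C₁ C₂ : ℝ) (hC₁ : 0 < C₁) (hC₂ : 0 < C₂)
    (he : ∀ I : Fin n → ℕ, ‖e I‖ ≤ C₁ * C₂ ^ (∑ a, I a)) :
    (∀ k : ℕ,
      ‖∑ I ∈ Finset.Nat.antidiagonalTuple n k,
          e (fun a => 2 * I a) * (-1) ^ k *
            ∏ a, (Nat.doubleFactorial (2 * I a - 1) : ℂ)‖ ≤
        C₁ * C₂ ^ (2 * k) * 2 ^ k * (k + n - 1).choose k * k.factorial) ∧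
    ∃ C₁' C₂' : ℝ, 0 < C₁' ∧ 0 < C₂' ∧ ∀ k : ℕ,
      ‖∑ I ∈ Finset.Nat.antidiagonalTuple n k,
          e (fun a => 2 * I a) * (-1) ^ k *
            ∏ a, (Nat.doubleFactorial (2 * I a - 1) : ℂ)‖ ≤
        C₁' * C₂' ^ k * k.factorial := by
  refine ⟨norm_gaussianCoeff_le he, C₁ * 2 ^ n, 4 * C₂ ^ 2, by positivity, by positivity,
    fun k => (norm_gaussianCoeff_le he k).trans ?_⟩
  calc C₁ * C₂ ^ (2 * k) * 2 ^ k * (k + n - 1).choose k * k !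
      ≤ C₁ * C₂ ^ (2 * k) * 2 ^ k * (2 ^ n * 2 ^ k) * k ! := by
        gcongr
        exact Nat.choose_add_sub_one_le_two_pow n k
    _ = C₁ * 2 ^ n * (4 * C₂ ^ 2) ^ k * k ! := by
        rw [mul_pow, pow_mul', show (4 : ℝ) = 2 * 2 by norm_num, mul_pow]
        ring

/-- Estimate for formal Gaussian asymptotic expansions: if `(e_I)_{I ∈ ℕ^n}` satisfy
`|e_I| ≤ C₁ C₂^{|I|}`, then the coefficients
`a_k = Σ_{|I|=k} e_{2I} (−1)^{|I|} Π_a (2 i_a − 1)!!`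
satisfy `|a_k| ≤ C₁ C₂^{2k} 2^k (k+n−1 choose k) k!`; in particular `Σ a_k z^k` is a
Gevrey series of order 1 (`|a_k| ≤ C₁' C₂'^k k!` for suitable constants).
Here `(2j−1)!!` is the double factorial with `(−1)!! = 1` (in Lean, `Nat.doubleFactorial
(2*j - 1)`, where `2*0 - 1 = 0` and `0‼ = 1`), and the sum is over multi-indices
`I ∈ ℕ^n` of total degree `k` (`Finset.Nat.antidiagonalTuple n k`). -/
theorem gaussian_asymptotic_estimate (n : ℕ) (hn : 1 ≤ n) (e : (Fin n → ℕ) → ℂ)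
    (C₁ C₂ : ℝ) (hC₁ : 0 < C₁) (hC₂ : 0 < C₂)
    (he : ∀ I : Fin n → ℕ, ‖e I‖ ≤ C₁ * C₂ ^ (∑ a, I a)) :
    (∀ k : ℕ,
      ‖∑ I ∈ Finset.Nat.antidiagonalTuple n k,
          e (fun a => 2 * I a) * (-1) ^ k *
            ∏ a, (Nat.doubleFactorial (2 * I a - 1) : ℂ)‖ ≤
        C₁ * C₂ ^ (2 * k) * 2 ^ k * (k + n - 1).choose k * k.factorial) ∧
    ∃ C₁' C₂' : ℝ, 0 < C₁' ∧ 0 < C₂' ∧ ∀ k : ℕ,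
      ‖∑ I ∈ Finset.Nat.antidiagonalTuple n k,
          e (fun a => 2 * I a) * (-1) ^ k *
            ∏ a, (Nat.doubleFactorial (2 * I a - 1) : ℂ)‖ ≤
        C₁' * C₂' ^ k * k.factorial :=
  gaussian_asymptotic_estimate_general n e C₁ C₂ hC₁ hC₂ he
end
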